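/- arXiv:2511.15152 — 2 statements merged into one kernel-verified Lean document; each statement's English description precedes it below -/
import Mathlib

section
/- Let k₁, k₂ ∈ ℝ² be linearly independent vectors and let S ⊂ ℝ² be a compact set such that m₁ k₁ + m₂ k₂ + w ≠ 0 for every m = (m₁, m₂) ∈ ℤ² and every w ∈ S. Then there exists a constant C > 0 such that |m₁ k₁ + m₂ k₂ + w| ≥ C (1 + |m|) for all m ∈ ℤ² and all w ∈ S. -/
/-!
The map `m ↦ m₁ k₁ + m₂ k₂` is linear and injective, hence antilipschitz, so
`‖m₁ k₁ + m₂ k₂ + w‖ ≥ ‖m‖ / K - R` where `R` bounds `S`. Being antilipschitz, it also sends the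
uniformly discrete lattice `ℤ²` to a uniformly discrete, hence closed, set; its sum with the
compact `S` is closed and misses `0`, which gives a uniform lower bound `δ > 0`. The two lower
bounds combine into one of the form `C (1 + ‖m‖)`.
-/

open Function Pointwise

lemma exists_pos_le_norm_add_of_zero_notMem_add {E : Type*} [NormedAddCommGroup E]
    {T S : Set E} (hT : IsClosed T) (hS : IsCompact S) (h0 : (0 : E) ∉ T + S) : ∃ δ > 0, ∀ t ∈ T, ∀ w ∈ S, δ ≤ ‖t + w‖ := by
  obtain ⟨δ, hδ, hball⟩ :=
    Metric.isOpen_iff.mp (hT.add_right_of_isCompact hS).isOpen_compl 0 h0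
  refine ⟨δ, hδ, fun t ht w hw => not_lt.mp fun hlt => hball ?_ (Set.add_mem_add ht hw)⟩
  simpa using hlt

lemma AntilipschitzWith.isClosed_image_of_pairwise_le_dist {α β : Type*} [PseudoMetricSpace α]
    [MetricSpace β] {K : NNReal} {f : α → β} (hf : AntilipschitzWith K f) (hK : 0 < K)
    {s : Set α} {ε : ℝ} (hε : 0 < ε) (hs : s.Pairwise fun x y => ε ≤ dist x y) :
    IsClosed (f '' s) := by
  have hK' : (0 : ℝ) < K := hK
  refine Metric.isClosed_of_pairwise_le_dist (div_pos hε hK') ?_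
  rintro _ ⟨x, hx, rfl⟩ _ ⟨y, hy, rfl⟩ hxy
  rw [div_le_iff₀' hK']
  exact (hs hx hy (ne_of_apply_ne f hxy)).trans (hf.le_mul_dist x y)

lemma div_mul_one_add_le_of_le_mul_add {δ K R x s : ℝ} (hδ : 0 < δ) (hK : 0 ≤ K) (hR : 0 ≤ R)
    (hx : δ ≤ x) (hs : s ≤ K * (x + R)) : δ / (1 + K * (δ + R)) * (1 + s) ≤ x := by
  rw [div_mul_eq_mul_div, div_le_iff₀ (by positivity)]
  nlinarith [mul_le_mul_of_nonneg_left hs hδ.le, mul_le_mul_of_nonneg_left hx (mul_nonneg hK hR)]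

section

variable {V E : Type*} [NormedAddCommGroup V] [NormedSpace ℝ V] [FiniteDimensional ℝ V]
  [NormedAddCommGroup E] [NormedSpace ℝ E]

theorem LinearMap.exists_pos_mul_one_add_norm_le_norm_add {A : V →ₗ[ℝ] E} (hA : Injective A)
    {Λ : Set V} {ε : ℝ} (hε : 0 < ε) (hΛ : Λ.Pairwise fun x y => ε ≤ dist x y)
    {S : Set E} (hS : IsCompact S) (hne : ∀ v ∈ Λ, ∀ w ∈ S, A v + w ≠ 0) :
    ∃ C > 0, ∀ v ∈ Λ, ∀ w ∈ S, C * (1 + ‖v‖) ≤ ‖A v + w‖ := by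
  obtain ⟨K, hK, hAK⟩ := A.injective_iff_antilipschitz.mp hA
  obtain ⟨δ, hδ, hδle⟩ := exists_pos_le_norm_add_of_zero_notMem_add
    (hAK.isClosed_image_of_pairwise_le_dist hK hε hΛ) hS
    (by rintro ⟨_, ⟨v, hv, rfl⟩, w, hw, h⟩; exact hne v hv w hw h)
  obtain ⟨R, hR, hSR⟩ := hS.isBounded.exists_pos_norm_le
  refine ⟨δ / (1 + K * (δ + R)), by positivity, fun v hv w hw => ?_⟩
  refine div_mul_one_add_le_of_le_mul_add hδ K.2 hR.le (hδle _ ⟨v, hv, rfl⟩ w hw) ?_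
  calc ‖v‖ ≤ K * ‖A v‖ := by simpa using hAK.le_mul_dist v 0
    _ ≤ K * (‖A v + w‖ + R) := by
      gcongr
      calc ‖A v‖ ≤ ‖A v + w‖ + ‖w‖ := by simpa using norm_sub_le (A v + w) w
        _ ≤ ‖A v + w‖ + R := by gcongr; exact hSR w hw

end

lemma EuclideanSpace.pairwise_one_le_dist_intCast {ι : Type*} [Fintype ι] :
    (Set.range fun m : ι → ℤ => WithLp.toLp 2 fun i => (m i : ℝ)).Pairwise
      fun x y => 1 ≤ dist x y := by
  rintro _ ⟨m, rfl⟩ _ ⟨n, rfl⟩ hmn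
  obtain ⟨i, hi⟩ := Function.ne_iff.mp fun h : m = n => hmn (h ▸ rfl)
  calc (1 : ℝ) ≤ |((m i - n i : ℤ) : ℝ)| := by exact_mod_cast Int.one_le_abs (sub_ne_zero.mpr hi)
    _ ≤ _ := by
      simpa [Real.dist_eq] using PiLp.dist_apply_le (WithLp.toLp 2 fun i => (m i : ℝ))
        (WithLp.toLp 2 fun i => (n i : ℝ)) i

theorem LinearIndependent.exists_pos_mul_one_add_norm_le_norm_sum_add {ι E : Type*} [Fintype ι]
    [NormedAddCommGroup E] [NormedSpace ℝ E] {k : ι → E} (hk : LinearIndependent ℝ k)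
    {S : Set E} (hS : IsCompact S) (hne : ∀ m : ι → ℤ, ∀ w ∈ S, ∑ i, (m i : ℝ) • k i + w ≠ 0) :
    ∃ C > 0, ∀ m : ι → ℤ, ∀ w ∈ S,
      C * (1 + ‖WithLp.toLp 2 fun i => (m i : ℝ)‖) ≤ ‖∑ i, (m i : ℝ) • k i + w‖ := by
  set A := (Fintype.linearCombination ℝ k).comp (WithLp.linearEquiv 2 ℝ (ι → ℝ)).toLinearMap
  have hA : Injective A := hk.fintypeLinearCombination_injective.comp (LinearEquiv.injective _)
  obtain ⟨C, hC, hCle⟩ := LinearMap.exists_pos_mul_one_add_norm_le_norm_add hA one_pos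
    EuclideanSpace.pairwise_one_le_dist_intCast hS
    (by rintro _ ⟨m, rfl⟩ w hw; simpa [A, Fintype.linearCombination_apply] using hne m w hw)
  refine ⟨C, hC, fun m w hw => ?_⟩
  simpa [A, Fintype.linearCombination_apply] using hCle _ ⟨m, rfl⟩ w hw

theorem stmt8 (k₁ k₂ : EuclideanSpace ℝ (Fin 2))
    (h : LinearIndependent ℝ ![k₁, k₂])
    (S : Set (EuclideanSpace ℝ (Fin 2))) (hS : IsCompact S)
    (hne : ∀ m : ℤ × ℤ, ∀ w ∈ S, (m.1 : ℝ) • k₁ + (m.2 : ℝ) • k₂ + w ≠ 0) :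
    ∃ C > (0 : ℝ), ∀ m : ℤ × ℤ, ∀ w ∈ S,
      C * (1 + Real.sqrt ((m.1 : ℝ)^2 + (m.2 : ℝ)^2)) ≤
        ‖(m.1 : ℝ) • k₁ + (m.2 : ℝ) • k₂ + w‖ := by
  obtain ⟨C, hC, hCle⟩ := h.exists_pos_mul_one_add_norm_le_norm_sum_add hS
    fun m w hw => by simpa [Fin.sum_univ_two] using hne (m 0, m 1) w hw
  refine ⟨C, hC, fun m w hw => ?_⟩
  simpa [Fin.sum_univ_two, EuclideanSpace.norm_eq] using hCle ![m.1, m.2] w hw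
end

section
/- Let B₀ > 0, k ∈ ℝ and n ∈ ℕ. Define φ : ℝ → ℝ by φ(x) = H_n(ξ) e^{-ξ²/2} with ξ = √B₀ (x - k/B₀). Then φ is twice differentiable and satisfies -φ''(x) + (k - B₀ x)² φ(x) = (2n+1) B₀ φ(x) for every x ∈ ℝ. -/
/-! With `ξ = √B₀ (x - k/B₀)` one has `B₀ ξ² = (k - B₀ x)²`, so by the chain rule the claim is
`B₀` times the Hermite-function equation `-ψₙ'' + ξ² ψₙ = (2n+1) ψₙ` for `ψₙ ξ = Hₙ ξ e^{-ξ²/2}`.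
That equation follows from the raising relation `ψₙ' = ξ ψₙ - ψₙ₊₁` (equivalently
`Hₙ' = 2ξ Hₙ - Hₙ₊₁`) together with the three-term recurrence. -/

/-- The physicists' Hermite polynomials, as real functions:
`H₀ = 1`, `H₁ x = 2x`, and `H_{n+1} x = 2x · H_n x - 2n · H_{n-1} x`. -/
noncomputable def physHermite : ℕ → ℝ → ℝ
  | 0 => fun _ => 1
  | 1 => fun x => 2 * x
  | n + 2 => fun x => 2 * x * physHermite (n + 1) x - 2 * (n + 1) * physHermite n x

lemma physHermite_succ_succ (n : ℕ) (x : ℝ) :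
    physHermite (n + 2) x = 2 * x * physHermite (n + 1) x - 2 * (n + 1) * physHermite n x :=
  rfl

lemma hasDerivAt_physHermite : ∀ (n : ℕ) (x : ℝ),
    HasDerivAt (physHermite n) (2 * x * physHermite n x - physHermite (n + 1) x) x
  | 0, x => by
    simpa [physHermite] using hasDerivAt_const x (1 : ℝ)
  | 1, x => ((hasDerivAt_id x).const_mul (2 : ℝ)).congr_deriv (by norm_num [physHermite])
  | n + 2, x => by
    have h := (((hasDerivAt_id x).const_mul (2 : ℝ)).mul (hasDerivAt_physHermite (n + 1) x)).sub
      ((hasDerivAt_physHermite n x).const_mul (2 * ((n : ℝ) + 1)))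
    refine h.congr_deriv ?_
    simp only [id, physHermite_succ_succ (n + 1), physHermite_succ_succ n]
    push_cast
    ring

noncomputable def hermiteFunction (n : ℕ) (y : ℝ) : ℝ :=
  physHermite n y * Real.exp (-y ^ 2 / 2)

lemma hermiteFunction_succ_succ (n : ℕ) (y : ℝ) :
    hermiteFunction (n + 2) y =
      2 * y * hermiteFunction (n + 1) y - 2 * (n + 1) * hermiteFunction n y := by
  simp only [hermiteFunction, physHermite_succ_succ]
  ring

lemma hasDerivAt_hermiteFunction (n : ℕ) (y : ℝ) :
    HasDerivAt (hermiteFunction n) (y * hermiteFunction n y - hermiteFunction (n + 1) y) y := by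
  have hgauss : HasDerivAt (fun y : ℝ => -y ^ 2 / 2) (-y) y :=
    (((hasDerivAt_pow 2 y).neg).div_const 2).congr_deriv (by ring)
  refine ((hasDerivAt_physHermite n y).mul hgauss.exp).congr_deriv ?_
  simp only [hermiteFunction]
  ring

lemma differentiable_hermiteFunction (n : ℕ) : Differentiable ℝ (hermiteFunction n) :=
  fun y => (hasDerivAt_hermiteFunction n y).differentiableAt

lemma deriv_hermiteFunction (n : ℕ) :
    deriv (hermiteFunction n) = fun y => y * hermiteFunction n y - hermiteFunction (n + 1) y :=
  funext fun y => (hasDerivAt_hermiteFunction n y).deriv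

lemma hasDerivAt_deriv_hermiteFunction (n : ℕ) (y : ℝ) :
    HasDerivAt (deriv (hermiteFunction n)) ((y ^ 2 - (2 * n + 1)) * hermiteFunction n y) y := by
  rw [deriv_hermiteFunction]
  refine (((hasDerivAt_id y).mul (hasDerivAt_hermiteFunction n y)).sub
    (hasDerivAt_hermiteFunction (n + 1) y)).congr_deriv ?_
  simp only [id, hermiteFunction_succ_succ]
  ring

lemma differentiable_deriv_hermiteFunction (n : ℕ) :
    Differentiable ℝ (deriv (hermiteFunction n)) :=
  fun y => (hasDerivAt_deriv_hermiteFunction n y).differentiableAt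

lemma deriv_comp_mul_sub (f : ℝ → ℝ) (a b : ℝ) :
    deriv (fun x => f (a * (x - b))) = fun x => a * deriv f (a * (x - b)) :=
  funext fun x => (deriv_comp_sub_const (f := fun y => f (a * y)) b x).trans
    (deriv_comp_mul_left ..)

theorem stmt9 (B₀ k : ℝ) (hB : 0 < B₀) (n : ℕ) (φ : ℝ → ℝ)
    (hφ : φ = fun x => physHermite n (Real.sqrt B₀ * (x - k / B₀)) *
      Real.exp (-(Real.sqrt B₀ * (x - k / B₀))^2 / 2)) :
    Differentiable ℝ φ ∧ Differentiable ℝ (deriv φ) ∧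
    ∀ x : ℝ, -(deriv (deriv φ) x) + (k - B₀ * x)^2 * φ x = (2 * n + 1) * B₀ * φ x := by
  set c := Real.sqrt B₀
  replace hφ : φ = fun x => hermiteFunction n (c * (x - k / B₀)) := hφ
  have hφ' : deriv φ = fun x => c * deriv (hermiteFunction n) (c * (x - k / B₀)) := by
    rw [hφ, deriv_comp_mul_sub]
  have hφ'' (x : ℝ) : deriv (deriv φ) x =
      c * c * ((c * (x - k / B₀)) ^ 2 - (2 * n + 1)) * hermiteFunction n (c * (x - k / B₀)) := by
    rw [hφ', deriv_const_mul_field', deriv_comp_mul_sub]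
    simp only [(hasDerivAt_deriv_hermiteFunction n _).deriv]
    ring
  refine ⟨?_, ?_, fun x => ?_⟩
  · rw [hφ]
    exact (differentiable_hermiteFunction n).comp (by fun_prop)
  · rw [hφ']
    exact ((differentiable_deriv_hermiteFunction n).comp (by fun_prop)).const_mul c
  · have hc : c * c = B₀ := Real.mul_self_sqrt hB.le
    have hξ : c * c * (c * (x - k / B₀)) ^ 2 = (k - B₀ * x) ^ 2 := by
      rw [show c * c * (c * (x - k / B₀)) ^ 2 = (c * c * (x - k / B₀)) ^ 2 by ring, hc,
        mul_sub, mul_div_cancel₀ k hB.ne']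
      ring
    rw [hφ'', hφ]
    linear_combination (-hermiteFunction n (c * (x - k / B₀))) * hξ
      + (2 * n + 1) * hermiteFunction n (c * (x - k / B₀)) * hc
end
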